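/- arXiv:1312.3055 — 2 statements merged into one kernel-verified Lean document; each statement's English description precedes it below -/
import Mathlib

section
/- Let α ∈ (2/3, 1) and for integers i ≥ 1 define p_i = (2/4^i)·((2i−2)!/((i−1)!·(i+1)!))·(2/α − 2)^i·((3α−2)i + 1). Then Σ_{i≥1} p_i = 1 − α. -/
/-!
With `x = 2/α - 2`, the factorial ratio in `p (n + 1)` is `C n / (n + 2)` for the Catalan number
`C n`, and the recursion `(n + 2) C (n + 1) = 2 (2n + 1) C n` makes the series telescope:
`p (n + 1) = Φ n - Φ (n + 1)` with `Φ n = 2α (x/4)^(n+1) C n`. For `α ∈ (2/3, 1)` we have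
`0 ≤ x < 1`, so the terms are nonnegative and, as `C n ≤ 4^n`, `Φ n → 0`; the sum is `Φ 0 = 1 - α`.
-/

open Filter Topology Nat

theorem Nat.cast_catalan_eq_factorial_div {K : Type*} [Field K] [CharZero K] (n : ℕ) :
    (catalan n : K) = (2 * n)! / (n ! * (n + 1)!) := by
  have h := congrArg (Nat.cast (R := K)) (succ_mul_catalan_eq_centralBinom n)
  rw [centralBinom_eq_two_mul_choose, Nat.cast_choose K (by omega : n ≤ 2 * n),
    show 2 * n - n = n by omega] at h
  push_cast at h
  rw [factorial_succ]
  push_cast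
  field_simp
  linear_combination h

theorem Nat.cast_catalan_div_add_two {K : Type*} [Field K] [CharZero K] (n : ℕ) :
    (catalan n : K) / (n + 2) = (2 * n)! / (n ! * (n + 2)!) := by
  rw [Nat.cast_catalan_eq_factorial_div, factorial_succ (n + 1)]
  push_cast
  field_simp
  ring

theorem catalan_le_four_pow (n : ℕ) : catalan n ≤ 4 ^ n :=
  calc catalan n ≤ (n + 1) * catalan n := Nat.le_mul_of_pos_left _ n.succ_pos
    _ = centralBinom n := succ_mul_catalan_eq_centralBinom n
    _ ≤ 4 ^ n := centralBinom_le_four_pow n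

theorem succ_succ_mul_catalan_succ (n : ℕ) :
    (n + 2) * catalan (n + 1) = 2 * (2 * n + 1) * catalan n := by
  apply Nat.eq_of_mul_eq_mul_left n.succ_pos
  calc (n + 1) * ((n + 2) * catalan (n + 1)) = (n + 1) * centralBinom (n + 1) := by
        rw [← succ_mul_catalan_eq_centralBinom]
    _ = 2 * (2 * n + 1) * centralBinom n := succ_mul_centralBinom_succ n
    _ = (n + 1) * (2 * (2 * n + 1) * catalan n) := by
        rw [← succ_mul_catalan_eq_centralBinom]; ring

theorem tendsto_catalan_mul_pow {x : ℝ} (hx : |x| < 1) :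
    Tendsto (fun n ↦ catalan n * (x / 4) ^ n) atTop (𝓝 0) := by
  refine squeeze_zero_norm (fun n ↦ ?_) (tendsto_pow_atTop_nhds_zero_of_lt_one (abs_nonneg x) hx)
  have hC : (catalan n : ℝ) ≤ 4 ^ n := by exact_mod_cast catalan_le_four_pow n
  calc ‖(catalan n : ℝ) * (x / 4) ^ n‖ = catalan n * |x| ^ n / 4 ^ n := by
        rw [norm_mul, norm_pow, Real.norm_eq_abs, Real.norm_eq_abs, abs_div, Nat.abs_cast, div_pow]
        norm_num; ring
    _ ≤ 4 ^ n * |x| ^ n / 4 ^ n := by gcongr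
    _ = |x| ^ n := by field_simp

theorem hasSum_sub_succ_of_antitone {F : ℕ → ℝ} {l : ℝ} (hF : Antitone F)
    (hl : Tendsto F atTop (𝓝 l)) : HasSum (fun n ↦ F n - F (n + 1)) (F 0 - l) := by
  rw [hasSum_iff_tendsto_nat_of_nonneg fun n ↦ sub_nonneg.2 (hF n.le_succ)]
  simpa only [Finset.sum_range_sub'] using tendsto_const_nhds.sub hl

noncomputable def peelingPotential (α : ℝ) (n : ℕ) : ℝ :=
  2 * α * ((2 / α - 2) / 4) ^ (n + 1) * catalan n

section
variable {α : ℝ}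

theorem peelingPotential_zero (hα : α ≠ 0) : peelingPotential α 0 = 1 - α := by
  simp only [peelingPotential, zero_add, pow_one, catalan_zero, cast_one, mul_one]
  field_simp
  ring

theorem peelingPotential_sub_succ (hα : α ≠ 0) (n : ℕ) :
    peelingPotential α n - peelingPotential α (n + 1) =
      2 / 4 ^ (n + 1) * (catalan n / (n + 2)) * (2 / α - 2) ^ (n + 1) *
        ((3 * α - 2) * (n + 1) + 1) := by
  have h := congrArg (Nat.cast (R := ℝ)) (succ_succ_mul_catalan_succ n)
  push_cast at h
  have hC : (catalan (n + 1) : ℝ) = 2 * (2 * n + 1) * catalan n / (n + 2) := by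
    rw [← h]; field_simp
  rw [peelingPotential, peelingPotential, hC, pow_succ _ (n + 1), div_pow]
  set x := 2 / α - 2 with hx
  have hαx : α * x = 2 - 2 * α := by rw [hx]; field_simp
  field_simp
  linear_combination (-(2 + 4 * n) * x * x ^ n * catalan n : ℝ) * hαx

theorem peelingPotential_antitone (h0 : 2 / 3 ≤ α) (h1 : α ≤ 1) :
    Antitone (peelingPotential α) := by
  have hα : 0 < α := by linarith
  have hx : 0 ≤ 2 / α - 2 := by rw [sub_nonneg, le_div_iff₀ hα]; linarith
  refine antitone_nat_of_succ_le fun n ↦ sub_nonneg.1 ?_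
  rw [peelingPotential_sub_succ hα.ne']
  have hlin : 0 ≤ (3 * α - 2) * (n + 1) + 1 := by nlinarith
  exact mul_nonneg (mul_nonneg (by positivity) (pow_nonneg hx _)) hlin

theorem tendsto_peelingPotential (h0 : 2 / 3 < α) (h2 : α < 2) :
    Tendsto (peelingPotential α) atTop (𝓝 0) := by
  have hα : 0 < α := by linarith
  have hx : |2 / α - 2| < 1 := by
    rw [abs_sub_lt_iff, sub_lt_iff_lt_add, sub_lt_comm, div_lt_iff₀ hα, lt_div_iff₀ hα]
    constructor <;> linarith
  have h := (tendsto_catalan_mul_pow hx).const_mul (2 * α * ((2 / α - 2) / 4))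
  rw [mul_zero] at h
  refine h.congr fun n ↦ ?_
  rw [peelingPotential, pow_succ]
  ring

end

theorem supercritical_pi_sums_to_one_minus_alpha
    (α : ℝ) (hα0 : 2 / 3 < α) (hα1 : α < 1)
    (p : ℕ → ℝ)
    (hp : ∀ i : ℕ, 1 ≤ i →
      p i = 2 / 4 ^ i *
        ((Nat.factorial (2 * i - 2) : ℝ) /
          ((Nat.factorial (i - 1) : ℝ) * (Nat.factorial (i + 1) : ℝ))) *
        (2 / α - 2) ^ i * ((3 * α - 2) * (i : ℝ) + 1)) :
    HasSum (fun i : ℕ => p (i + 1)) (1 - α) := by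
  have hα : α ≠ 0 := (by linarith : 0 < α).ne'
  have hterm : (fun n ↦ p (n + 1)) = fun n ↦ peelingPotential α n - peelingPotential α (n + 1) := by
    funext n
    rw [hp (n + 1) (Nat.le_add_left 1 n), peelingPotential_sub_succ hα, Nat.cast_catalan_div_add_two,
      show 2 * (n + 1) - 2 = 2 * n by omega, Nat.add_sub_cancel]
    push_cast
    ring
  have h := hasSum_sub_succ_of_antitone (peelingPotential_antitone hα0.le hα1.le)
    (tendsto_peelingPotential hα0 (by linarith))
  rwa [peelingPotential_zero hα, sub_zero, ← hterm] at h
end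

section
/- Let α ∈ [0, 2/3) and for integers i ≥ 1 define p_i = (2/4^i)·((2i−2)!/((i−1)!·(i+1)!))·((1−3α/2)i + 1). Then i^{3/2}·p_i converges to (1 − 3α/2)/(2√π) as i → ∞; in particular p_i ~ ((1−3α/2)/(2√π))·i^{−3/2}. -/
/-!
With `n = i - 1`, the factorial ratio in `p i` is `C(2n, n) / ((n + 1) (n + 2))`, so
`i ^ (3/2) * p i` is `√(n + 1) · C(2n, n) / 4 ^ n` times a rational function of `n` tending to
`(1 - 3α/2) / 2`. The `n`-th Wallis product is `W n = 16 ^ n / (C(2n, n) ^ 2 (2n + 1))`, and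
`W n → π / 2` gives `√(n + 1) · C(2n, n) / 4 ^ n → 1 / √π`.
-/

open Filter Real Topology Nat

lemma tendsto_affine_div_affine_atTop (a b c d : ℝ) (hc : c ≠ 0) :
    Tendsto (fun n : ℕ => (a * n + b) / (c * n + d)) atTop (𝓝 (a / c)) := by
  have h := ((tendsto_const_div_atTop_nhds_zero_nat b).const_add a).div
    ((tendsto_const_div_atTop_nhds_zero_nat d).const_add c) (by simpa using hc)
  simp only [add_zero] at h
  refine h.congr' ?_
  filter_upwards [eventually_ne_atTop 0] with n hn
  have : (n : ℝ) ≠ 0 := Nat.cast_ne_zero.mpr hn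
  show (a + b / n) / (c + d / n) = _
  field_simp

lemma centralBinom_mul_factorial_mul_factorial (n : ℕ) :
    centralBinom n * n ! * n ! = (2 * n)! := by
  simpa [centralBinom_eq_two_mul_choose, two_mul] using
    choose_mul_factorial_mul_factorial (Nat.le_add_right n n)

lemma sq_centralBinom_div_four_pow_mul (n : ℕ) :
    ((centralBinom n : ℝ) / 4 ^ n) ^ 2 * (2 * n + 1) = (Wallis.W n)⁻¹ := by
  rw [Wallis.W_eq_factorial_ratio, ← centralBinom_mul_factorial_mul_factorial,
    show (2 : ℝ) ^ (4 * n) = (4 ^ n) ^ 2 by rw [← pow_mul, pow_mul, mul_comm, pow_mul]; norm_num]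
  have : (n ! : ℝ) ≠ 0 := by positivity
  push_cast
  field_simp

lemma tendsto_sqrt_succ_mul_centralBinom_div_four_pow :
    Tendsto (fun n : ℕ => √(n + 1) * (centralBinom n / 4 ^ n)) atTop (𝓝 (√π)⁻¹) := by
  have hsq : Tendsto (fun n : ℕ => (n + 1) * ((centralBinom n : ℝ) / 4 ^ n) ^ 2)
      atTop (𝓝 π⁻¹) := by
    have h := (Wallis.tendsto_W_nhds_pi_div_two.inv₀ (by positivity)).mul
      (tendsto_affine_div_affine_atTop 1 1 2 1 two_ne_zero)
    rw [show (π / 2)⁻¹ * (1 / 2) = π⁻¹ by ring] at h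
    refine h.congr fun n => ?_
    rw [← sq_centralBinom_div_four_pow_mul]
    field_simp
  have h := (continuous_sqrt.tendsto _).comp hsq
  rw [sqrt_inv] at h
  refine h.congr fun n => ?_
  simp only [Function.comp_apply]
  rw [sqrt_mul (by positivity), sqrt_sq (by positivity)]

lemma factorial_two_mul_div_factorial_mul_factorial_add_two (n : ℕ) :
    ((2 * n)! : ℝ) / (n ! * (n + 2)!) = centralBinom n / ((n + 1) * (n + 2)) := by
  rw [← centralBinom_mul_factorial_mul_factorial, factorial_succ, factorial_succ]
  have : (n ! : ℝ) ≠ 0 := by positivity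
  push_cast
  field_simp
  ring

theorem subcritical_pi_asymptotics_general
    (α : ℝ)
    (p : ℕ → ℝ)
    (hp : ∀ i : ℕ, 1 ≤ i →
      p i = 2 / 4 ^ i *
        ((Nat.factorial (2 * i - 2) : ℝ) /
          ((Nat.factorial (i - 1) : ℝ) * (Nat.factorial (i + 1) : ℝ))) *
        ((1 - 3 * α / 2) * (i : ℝ) + 1)) :
    Tendsto (fun i : ℕ => (i : ℝ) ^ ((3 : ℝ) / 2) * p i) atTop
      (nhds ((1 - 3 * α / 2) / (2 * Real.sqrt Real.pi))) := by
  set c := 1 - 3 * α / 2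
  have h := tendsto_sqrt_succ_mul_centralBinom_div_four_pow.mul
    (tendsto_affine_div_affine_atTop c (c + 1) 2 4 two_ne_zero)
  rw [inv_mul_eq_div, div_div] at h
  rw [← tendsto_add_atTop_iff_nat 1]
  refine h.congr fun n => ?_
  rw [hp (n + 1) (Nat.le_add_left 1 n), show 2 * (n + 1) - 2 = 2 * n by omega, Nat.add_sub_cancel,
    factorial_two_mul_div_factorial_mul_factorial_add_two,
    show (3 : ℝ) / 2 = 1 + 1 / 2 by norm_num, rpow_add (by positivity), rpow_one, ← sqrt_eq_rpow]
  push_cast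
  field_simp
  ring

theorem subcritical_pi_asymptotics
    (α : ℝ) (hα0 : 0 ≤ α) (hα1 : α < 2 / 3)
    (p : ℕ → ℝ)
    (hp : ∀ i : ℕ, 1 ≤ i →
      p i = 2 / 4 ^ i *
        ((Nat.factorial (2 * i - 2) : ℝ) /
          ((Nat.factorial (i - 1) : ℝ) * (Nat.factorial (i + 1) : ℝ))) *
        ((1 - 3 * α / 2) * (i : ℝ) + 1)) :
    Tendsto (fun i : ℕ => (i : ℝ) ^ ((3 : ℝ) / 2) * p i) atTop
      (nhds ((1 - 3 * α / 2) / (2 * Real.sqrt Real.pi))) :=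
  subcritical_pi_asymptotics_general α p hp
end
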